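/- In the multidimensional elephant random walk with stops, if 1/2 < r ≤ 1, then limsup_{n→∞} Z_n*/√(2n·log log n) ≤ 1/√(2r−1) almost surely. -/

import Mathlib

open MeasureTheory ProbabilityTheory Filter

noncomputable section

/-- The `d × d` cyclic permutation matrix `J_d` with ones on the superdiagonal and in
position `(d, 1)`. -/
def cyclicMatrix (d : ℕ) : Matrix (Fin d) (Fin d) ℝ :=
  Matrix.of fun i j => if (j : ℕ) = ((i : ℕ) + 1) % d then 1 else 0

/-- A matrix is measurable entrywise. -/
instance {m n : Type*} : MeasurableSpace (Matrix m n ℝ) :=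
  inferInstanceAs (MeasurableSpace (m → n → ℝ))

/-- The multidimensional elephant random walk with stops, with memory parameters
`p`, `q`, `r` satisfying `p + (2d-1)q + r = 1`. -/
structure MERWStops {Ω : Type*} [MeasurableSpace Ω] (P : Measure Ω)
    (d : ℕ) (p q r : ℝ) where
  X : ℕ → Ω → EuclideanSpace ℝ (Fin d)
  A : ℕ → Ω → Matrix (Fin d) (Fin d) ℝ
  β : ℕ → Ω → ℕ
  hd : 1 ≤ d
  hp : p ∈ Set.Icc (0 : ℝ) 1
  hq : q ∈ Set.Icc (0 : ℝ) 1
  hr : r ∈ Set.Icc (0 : ℝ) 1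
  hpqr : p + (2 * (d : ℝ) - 1) * q + r = 1
  measX : ∀ n, Measurable (X n)
  measA : ∀ n, Measurable (A n)
  measβ : ∀ n, Measurable (β n)
  /-- `X 1` is uniformly distributed on `{± e_1, …, ± e_d}`. -/
  hX1 : ∀ i : Fin d,
    P {ω | X 1 ω = EuclideanSpace.single i (1 : ℝ)} = ENNReal.ofReal (1 / (2 * (d : ℝ))) ∧
    P {ω | X 1 ω = -EuclideanSpace.single i (1 : ℝ)} = ENNReal.ofReal (1 / (2 * (d : ℝ)))
  /-- The recursion `X (n+1) = A (n+1) * X (β n)`. -/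
  hrec : ∀ n, 1 ≤ n → ∀ ω, ∀ i, X (n + 1) ω i = ∑ j, A (n + 1) ω i j * X (β n ω) ω j
  /-- `β n` is uniformly distributed on `{1, …, n}`. -/
  hβ : ∀ n, 1 ≤ n → ∀ k ∈ Finset.Icc 1 n, P {ω | β n ω = k} = ENNReal.ofReal (1 / (n : ℝ))
  hAI : ∀ n, 1 ≤ n → P {ω | A (n + 1) ω = 1} = ENNReal.ofReal p
  hAnegI : ∀ n, 1 ≤ n → P {ω | A (n + 1) ω = -1} = ENNReal.ofReal q
  hAJ : ∀ n, 1 ≤ n → ∀ i ∈ Finset.Icc 1 (d - 1),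
    P {ω | A (n + 1) ω = cyclicMatrix d ^ i} = ENNReal.ofReal q
  hAnegJ : ∀ n, 1 ≤ n → ∀ i ∈ Finset.Icc 1 (d - 1),
    P {ω | A (n + 1) ω = -(cyclicMatrix d ^ i)} = ENNReal.ofReal q
  hAzero : ∀ n, 1 ≤ n → P {ω | A (n + 1) ω = 0} = ENNReal.ofReal r
  /-- `A (n+1)`, `β n` and `σ(X_1, …, X_n)` are mutually independent. -/
  hindep : ∀ n, 1 ≤ n →
    iIndep
      ![MeasurableSpace.comap (A (n + 1)) inferInstance,
        MeasurableSpace.comap (β n) inferInstance,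
        ⨆ k ∈ Finset.Icc 1 n, MeasurableSpace.comap (X k) inferInstance] P

namespace MERWStops

variable {Ω : Type*} [MeasurableSpace Ω] {P : Measure Ω} {d : ℕ} {p q r : ℝ}

/-- The number of moves up to time `n` : `Z_n* = ∑_{k=1}^n ‖X_k‖²`. -/
def Zstar (W : MERWStops P d p q r) (n : ℕ) (ω : Ω) : ℝ :=
  ∑ k ∈ Finset.Icc 1 n, ‖W.X k ω‖ ^ 2

/-- The σ-field `G_n = σ(X_1, …, X_n)`. -/
def G (W : MERWStops P d p q r) (n : ℕ) : MeasurableSpace Ω :=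
  ⨆ k ∈ Finset.Icc 1 n, MeasurableSpace.comap (W.X k) inferInstance

/-- The normalizing sequence `a_1 = 1`, `a_n = ∏_{k=1}^{n-1} (1 + (1-r)/k)`. -/
def aseq (r : ℝ) (n : ℕ) : ℝ :=
  ∏ k ∈ Finset.Icc 1 (n - 1), (1 + (1 - r) / (k : ℝ))

end MERWStops

/-!
Almost surely `A_{n+1}` is `0` or one of the isometries `±J_d^i` (the listed probabilities already
sum to one), so `‖X_k‖ ≤ 1` for all `k` and `Z_n* ≤ #{k ≤ n : X_k ≠ 0}`. Since `X_{n+1} ≠ 0` forces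
`A_{n+1} ≠ 0` and `X_{β(n)} ≠ 0`, independence gives
`P(X_{n+1} ≠ 0) ≤ (1-r)/n · ∑_{k ≤ n} P(X_k ≠ 0)`, whence `E Z_n* ≤ a_n ≤ e^{1-r} n^{1-r}`.
Markov's inequality at the times `2^j` with thresholds `√(2^j)` gives probabilities
`≤ e^{1-r} (2^{1/2-r})^j`, summable because `r > 1/2`; by Borel–Cantelli and monotonicity of
`Z_n*`, almost surely `Z_n* ≤ √(2n)` eventually, so `Z_n*/√(2n log log n) → 0`.
-/

open Finset Topology
open scoped ENNReal

instance {m n : Type*} [Countable m] [Countable n] : MeasurableSingletonClass (Matrix m n ℝ) :=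
  inferInstanceAs (MeasurableSingletonClass (m → n → ℝ))

section CyclicMatrix

open Matrix Fin.NatCast

theorem cyclicMatrix_succ_apply (n : ℕ) (a b : Fin (n + 1)) :
    cyclicMatrix (n + 1) a b = if b = a + 1 then 1 else 0 := by
  simp [cyclicMatrix, Fin.ext_iff, Fin.val_add]

theorem cyclicMatrix_pow_apply (n i : ℕ) (a b : Fin (n + 1)) :
    (cyclicMatrix (n + 1) ^ i) a b = if b = a + (i : Fin (n + 1)) then 1 else 0 := by
  induction i generalizing b with
  | zero => simp [one_apply, eq_comm]
  | succ i ih =>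
    simp only [pow_succ, mul_apply, ih, ite_mul, one_mul, zero_mul, sum_ite_eq', mem_univ,
      if_true, cyclicMatrix_succ_apply]
    push_cast
    rw [add_assoc]

theorem cyclicMatrix_pow_mulVec (n i : ℕ) (v : Fin (n + 1) → ℝ) :
    cyclicMatrix (n + 1) ^ i *ᵥ v = fun a => v (a + (i : Fin (n + 1))) := by
  ext a
  simp [mulVec, dotProduct, cyclicMatrix_pow_apply]

theorem norm_toLpLin_cyclicMatrix_pow (n i : ℕ) (x : EuclideanSpace ℝ (Fin (n + 1))) :
    ‖toLpLin 2 2 (cyclicMatrix (n + 1) ^ i) x‖ = ‖x‖ := by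
  rw [EuclideanSpace.norm_eq, EuclideanSpace.norm_eq, toLpLin_apply]
  simp only [cyclicMatrix_pow_mulVec]
  congr 1
  exact Equiv.sum_comp (Equiv.addRight (i : Fin (n + 1))) fun b => ‖x b‖ ^ 2

theorem cyclicMatrix_pow_zero_natCast (n i j : ℕ) (hi : i < n + 1) (hj : j < n + 1) :
    (cyclicMatrix (n + 1) ^ j) 0 (i : Fin (n + 1)) = if i = j then 1 else 0 := by
  simp [cyclicMatrix_pow_apply, Fin.ext_iff, Fin.val_natCast, Nat.mod_eq_of_lt hi,
    Nat.mod_eq_of_lt hj]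

def signedCyclicPowers (n : ℕ) : Finset (Matrix (Fin (n + 1)) (Fin (n + 1)) ℝ) :=
  (({1, -1} : Finset ℝ) ×ˢ range (n + 1)).image fun e => e.1 • cyclicMatrix (n + 1) ^ e.2

theorem injOn_smul_cyclicMatrix_pow (n : ℕ) :
    Set.InjOn (fun e : ℝ × ℕ => e.1 • cyclicMatrix (n + 1) ^ e.2)
      (({1, -1} : Finset ℝ) ×ˢ range (n + 1) : Finset (ℝ × ℕ)) := by
  rintro ⟨ε, i⟩ he ⟨ε', j⟩ he' h
  simp only [coe_product, Set.mem_prod, mem_coe, mem_insert, mem_singleton, mem_range] at he he'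
  have hentry : ε = ε' * if i = j then 1 else 0 := by
    simpa [cyclicMatrix_pow_zero_natCast n i _ he.2 he.2,
      cyclicMatrix_pow_zero_natCast n i _ he.2 he'.2] using congrFun (congrFun h 0) (i : Fin _)
  obtain rfl : i = j := by
    by_contra hij
    rcases he.1 with rfl | rfl <;> simp [hij] at hentry
  simp_all

theorem zero_notMem_signedCyclicPowers (n : ℕ) : (0 : Matrix _ _ ℝ) ∉ signedCyclicPowers n := by
  simp only [signedCyclicPowers, mem_image, mem_product, mem_insert, mem_singleton, mem_range,
    not_exists, not_and]
  rintro ⟨ε, i⟩ ⟨hε, hi⟩ h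
  have hentry := congrFun (congrFun h 0) (i : Fin (n + 1))
  rcases hε with rfl | rfl <;> simp [cyclicMatrix_pow_zero_natCast n i i hi hi] at hentry

theorem norm_toLpLin_le_of_mem_signedCyclicPowers {n : ℕ} {M : Matrix _ _ ℝ}
    (hM : M ∈ insert 0 (signedCyclicPowers n)) (x : EuclideanSpace ℝ (Fin (n + 1))) :
    ‖toLpLin 2 2 M x‖ ≤ ‖x‖ := by
  simp only [signedCyclicPowers, mem_insert, mem_image, mem_product, mem_singleton] at hM
  obtain rfl | ⟨⟨ε, i⟩, ⟨hε, -⟩, rfl⟩ := hM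
  · simp
  · rcases hε with rfl | rfl <;>
      simp only [one_smul, neg_smul, map_neg, LinearMap.neg_apply, norm_neg,
        norm_toLpLin_cyclicMatrix_pow, le_refl]

end CyclicMatrix

theorem injOn_smul_single (d : ℕ) :
    Set.InjOn (fun e : ℝ × Fin d => e.1 • EuclideanSpace.single e.2 (1 : ℝ))
      (({1, -1} : Finset ℝ) ×ˢ univ : Finset (ℝ × Fin d)) := by
  rintro ⟨ε, i⟩ he ⟨ε', j⟩ - h
  simp only [coe_product, Set.mem_prod, mem_coe, mem_insert, mem_singleton] at he
  have hentry : ε = ε' * if i = j then 1 else 0 := by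
    simpa [PiLp.single_apply, eq_comm] using congrArg (· i) h
  obtain rfl : i = j := by
    by_contra hij
    rcases he.1 with rfl | rfl <;> simp [hij] at hentry
  simp_all

theorem measureReal_eq_of_measure_eq_ofReal {Ω : Type*} [MeasurableSpace Ω] {μ : Measure Ω}
    {s : Set Ω} {c : ℝ} (hc : 0 ≤ c) (h : μ s = ENNReal.ofReal c) : μ.real s = c := by
  rw [measureReal_def, h, ENNReal.toReal_ofReal hc]

theorem ae_mem_of_sum_measureReal_eq_one {Ω α : Type*} [MeasurableSpace Ω] [MeasurableSpace α]
    [MeasurableSingletonClass α] {μ : Measure Ω} [IsProbabilityMeasure μ] {f : Ω → α}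
    (hf : Measurable f) {s : Finset α} (h : ∑ a ∈ s, μ.real {ω | f ω = a} = 1) :
    ∀ᵐ ω ∂μ, f ω ∈ s := by
  change ∀ᵐ ω ∂μ, ω ∈ f ⁻¹' s
  rw [ae_mem_iff_measure_eq (hf s.measurableSet).nullMeasurableSet, measure_univ,
    ← ENNReal.toReal_eq_one_iff, ← measureReal_def,
    ← sum_measureReal_preimage_singleton s fun a _ => hf (measurableSet_singleton a)]
  exact h

theorem ProbabilityTheory.iIndep.measure_inter_inter_eq_mul {Ω : Type*} [MeasurableSpace Ω]
    {μ : Measure Ω} {m : Fin 3 → MeasurableSpace Ω} (h : iIndep m μ) {s₀ s₁ s₂ : Set Ω}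
    (h₀ : MeasurableSet[m 0] s₀) (h₁ : MeasurableSet[m 1] s₁) (h₂ : MeasurableSet[m 2] s₂) :
    μ (s₀ ∩ s₁ ∩ s₂) = μ s₀ * μ s₁ * μ s₂ := by
  have := h.meas_iInter (s := ![s₀, s₁, s₂]) (Fin.forall_fin_succ.2 ⟨h₀, Fin.forall_fin_succ.2
    ⟨h₁, Fin.forall_fin_succ.2 ⟨h₂, fun i => i.elim0⟩⟩⟩)
  rwa [Fin.prod_univ_three, show ⋂ i, ![s₀, s₁, s₂] i = s₀ ∩ s₁ ∩ s₂ by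
    ext; simp [Fin.forall_fin_succ, and_assoc]] at this

theorem eventually_le_sqrt_two_mul_of_eventually_two_pow_lt {f : ℕ → ℝ} (hf : Monotone f)
    (h : ∀ᶠ j in atTop, f (2 ^ j) < √((2 : ℝ) ^ j)) : ∀ᶠ n in atTop, f n ≤ √(2 * n) := by
  obtain ⟨J, hJ⟩ := eventually_atTop.1 h
  filter_upwards [eventually_ge_atTop (2 ^ J)] with n hn
  have hn0 : n ≠ 0 := Nat.one_le_iff_ne_zero.1 (Nat.one_le_two_pow.trans hn)
  have hJ_le : J ≤ Nat.log 2 n := Nat.le_log_of_pow_le one_lt_two hn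
  have hlt : n < 2 ^ (Nat.log 2 n + 1) := Nat.lt_pow_succ_log_self one_lt_two n
  have hle : 2 ^ (Nat.log 2 n + 1) ≤ 2 * n := by
    rw [pow_succ']; exact Nat.mul_le_mul_left 2 (Nat.pow_log_le_self 2 hn0)
  calc f n ≤ f (2 ^ (Nat.log 2 n + 1)) := hf hlt.le
    _ ≤ √((2 : ℝ) ^ (Nat.log 2 n + 1)) := (hJ _ (by omega)).le
    _ ≤ √(2 * n) := Real.sqrt_le_sqrt (by exact_mod_cast hle)

theorem tendsto_div_sqrt_two_mul_log_log_of_eventually_le {f : ℕ → ℝ} (hf : ∀ n, 0 ≤ f n)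
    (h : ∀ᶠ n in atTop, f n ≤ √(2 * n)) :
    Tendsto (fun n : ℕ => f n / √(2 * n * Real.log (Real.log n))) atTop (𝓝 0) := by
  have hloglog : Tendsto (fun n : ℕ => Real.log (Real.log n)) atTop atTop :=
    Real.tendsto_log_atTop.comp (Real.tendsto_log_atTop.comp tendsto_natCast_atTop_atTop)
  have hinv : Tendsto (fun n : ℕ => 1 / √(Real.log (Real.log n))) atTop (𝓝 0) := by
    simpa only [one_div, Function.comp_def] using
      tendsto_inv_atTop_zero.comp (Real.tendsto_sqrt_atTop.comp hloglog)
  refine tendsto_of_tendsto_of_tendsto_of_le_of_le' tendsto_const_nhds hinv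
    (.of_forall fun n => div_nonneg (hf n) (Real.sqrt_nonneg _)) ?_
  filter_upwards [h, hloglog.eventually_gt_atTop 0, eventually_gt_atTop 0] with n hn hL hn0
  rw [Real.sqrt_mul (by positivity), ← div_div]
  gcongr
  exact div_le_one_of_le₀ hn (Real.sqrt_nonneg _)

namespace MERWStops

theorem aseq_succ (r : ℝ) {n : ℕ} (hn : 1 ≤ n) :
    aseq r (n + 1) = aseq r n * (1 + (1 - r) / n) := by
  obtain ⟨m, rfl⟩ := Nat.exists_eq_add_of_le' hn
  simp only [aseq, Nat.add_sub_cancel]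
  exact prod_Icc_succ_top (by omega) _

theorem aseq_nonneg {r : ℝ} (hr : r ≤ 1) (n : ℕ) : 0 ≤ aseq r n :=
  prod_nonneg fun k _ => by positivity

theorem aseq_le_exp_mul_rpow {r : ℝ} (hr : r ≤ 1) {n : ℕ} (hn : 1 ≤ n) :
    aseq r n ≤ Real.exp (1 - r) * (n : ℝ) ^ (1 - r) := by
  have hharmonic : ∑ k ∈ Icc 1 (n - 1), (1 - r) / k ≤ (1 - r) * (1 + Real.log n) := by
    calc ∑ k ∈ Icc 1 (n - 1), (1 - r) / k
        ≤ ∑ k ∈ Icc 1 n, (1 - r) / k :=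
          sum_le_sum_of_subset_of_nonneg (Icc_subset_Icc_right (by omega))
            fun _ _ _ => by positivity
      _ = (1 - r) * harmonic n := by
          simp [harmonic_eq_sum_Icc, mul_sum, div_eq_mul_inv]
      _ ≤ (1 - r) * (1 + Real.log n) :=
          mul_le_mul_of_nonneg_left (harmonic_le_one_add_log n) (by linarith)
  calc aseq r n ≤ ∏ k ∈ Icc 1 (n - 1), Real.exp ((1 - r) / k) :=
        prod_le_prod (fun k _ => by positivity) fun k _ => by
          linarith [Real.add_one_le_exp ((1 - r) / k)]
    _ = Real.exp (∑ k ∈ Icc 1 (n - 1), (1 - r) / k) := (Real.exp_sum _ _).symm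
    _ ≤ Real.exp ((1 - r) * (1 + Real.log n)) := Real.exp_le_exp.2 hharmonic
    _ = Real.exp (1 - r) * (n : ℝ) ^ (1 - r) := by
        rw [mul_add, mul_one, Real.exp_add, Real.rpow_def_of_pos (by positivity),
          mul_comm (Real.log _)]

variable {Ω : Type*} [MeasurableSpace Ω] {P : Measure Ω} {d : ℕ} {p q r : ℝ}
  (W : MERWStops P d p q r)

theorem X_succ_eq {n : ℕ} (hn : 1 ≤ n) (ω : Ω) :
    W.X (n + 1) ω = Matrix.toLpLin 2 2 (W.A (n + 1) ω) (W.X (W.β n ω) ω) := by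
  ext i
  simp [Matrix.toLpLin_apply, Matrix.mulVec, dotProduct, W.hrec n hn ω i]

theorem A_ne_zero_and_X_beta_ne_zero {n : ℕ} (hn : 1 ≤ n) {ω : Ω} (h : W.X (n + 1) ω ≠ 0) :
    W.A (n + 1) ω ≠ 0 ∧ W.X (W.β n ω) ω ≠ 0 := by
  rw [W.X_succ_eq hn] at h
  constructor <;> rintro h0 <;> simp [h0] at h

theorem measurable_Zstar (n : ℕ) : Measurable (W.Zstar n) :=
  Finset.measurable_sum _ fun k _ => (W.measX k).norm.pow_const 2

theorem Zstar_nonneg (n : ℕ) (ω : Ω) : 0 ≤ W.Zstar n ω :=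
  sum_nonneg fun _ _ => by positivity

theorem Zstar_mono (ω : Ω) : Monotone fun n => W.Zstar n ω := fun _ _ hmn =>
  sum_le_sum_of_subset_of_nonneg (Icc_subset_Icc_right hmn) fun _ _ _ => by positivity

theorem measure_A_beta_X_inter_eq_mul {n k : ℕ} (hn : 1 ≤ n)
    (hk : k ∈ Icc 1 n) :
    P ({ω | W.A (n + 1) ω ≠ 0} ∩ {ω | W.β n ω = k} ∩ {ω | W.X k ω ≠ 0})
      = P {ω | W.A (n + 1) ω ≠ 0} * P {ω | W.β n ω = k} * P {ω | W.X k ω ≠ 0} :=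
  (W.hindep n hn).measure_inter_inter_eq_mul ⟨{0}ᶜ, (measurableSet_singleton 0).compl, rfl⟩
    ⟨{k}, measurableSet_singleton k, rfl⟩
    (le_iSup₂ (f := fun j (_ : j ∈ Icc 1 n) => MeasurableSpace.comap (W.X j) inferInstance) k hk
      _ ⟨{0}ᶜ, (measurableSet_singleton 0).compl, rfl⟩)

variable [IsProbabilityMeasure P]

theorem ae_norm_X_one_le : ∀ᵐ ω ∂P, ‖W.X 1 ω‖ ≤ 1 := by
  have hd : (0 : ℝ) < d := by exact_mod_cast W.hd
  have hsum : ∑ x ∈ (({1, -1} : Finset ℝ) ×ˢ univ).image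
      (fun e : ℝ × Fin d => e.1 • EuclideanSpace.single e.2 (1 : ℝ)),
      P.real {ω | W.X 1 ω = x} = 1 := by
    rw [sum_image (injOn_smul_single d), sum_product, sum_pair (by norm_num)]
    simp only [one_smul, neg_smul, sum_congr rfl fun i _ => measureReal_eq_of_measure_eq_ofReal
      (by positivity) (W.hX1 i).1, sum_congr rfl fun i _ => measureReal_eq_of_measure_eq_ofReal
      (by positivity) (W.hX1 i).2, sum_const, card_univ, Fintype.card_fin, nsmul_eq_mul]
    field_simp
    ring
  filter_upwards [ae_mem_of_sum_measureReal_eq_one (W.measX 1) hsum] with ω hω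
  obtain ⟨⟨ε, i⟩, hε, hω⟩ := mem_image.1 hω
  simp only [mem_product, mem_insert, mem_singleton] at hε
  rw [← hω]
  rcases hε.1 with rfl | rfl <;> simp

theorem ae_beta_mem_Icc {n : ℕ} (hn : 1 ≤ n) : ∀ᵐ ω ∂P, W.β n ω ∈ Icc 1 n := by
  refine ae_mem_of_sum_measureReal_eq_one (W.measβ n) ?_
  have hn' : (0 : ℝ) < n := by exact_mod_cast hn
  rw [sum_congr rfl fun k hk => measureReal_eq_of_measure_eq_ofReal (by positivity)
    (W.hβ n hn k hk), sum_const, Nat.card_Icc, nsmul_eq_mul, Nat.add_sub_cancel]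
  field_simp

theorem ae_norm_toLpLin_A_le {n : ℕ} (hn : 1 ≤ n) :
    ∀ᵐ ω ∂P, ∀ x, ‖Matrix.toLpLin 2 2 (W.A (n + 1) ω) x‖ ≤ ‖x‖ := by
  obtain ⟨m, rfl⟩ := Nat.exists_eq_add_of_le' W.hd
  have hreal {M : Matrix (Fin (m + 1)) (Fin (m + 1)) ℝ} {c : ℝ} (hc : 0 ≤ c)
      (h : P {ω | W.A (n + 1) ω = M} = ENNReal.ofReal c) : P.real {ω | W.A (n + 1) ω = M} = c :=
    measureReal_eq_of_measure_eq_ofReal hc h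
  have hJ : ∀ i ∈ range m, 1 ≤ i + 1 ∧ i + 1 ≤ m + 1 - 1 := by
    intro i hi; simp only [mem_range] at hi; omega
  have hsum : ∑ M ∈ insert 0 (signedCyclicPowers m), P.real {ω | W.A (n + 1) ω = M} = 1 := by
    rw [sum_insert (zero_notMem_signedCyclicPowers m), signedCyclicPowers,
      sum_image (injOn_smul_cyclicMatrix_pow m), sum_product, sum_pair (by norm_num),
      sum_range_succ', sum_range_succ']
    simp only [one_smul, neg_smul, pow_zero]
    rw [hreal W.hr.1 (W.hAzero n hn), hreal W.hp.1 (W.hAI n hn), hreal W.hq.1 (W.hAnegI n hn),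
      sum_congr rfl fun i hi => hreal W.hq.1 (W.hAJ n hn (i + 1) (mem_Icc.2 (hJ i hi))),
      sum_congr rfl fun i hi => hreal W.hq.1 (W.hAnegJ n hn (i + 1) (mem_Icc.2 (hJ i hi))),
      sum_const, card_range, nsmul_eq_mul]
    have hpqr := W.hpqr
    push_cast at hpqr
    linear_combination hpqr
  filter_upwards [ae_mem_of_sum_measureReal_eq_one (W.measA _) hsum] with ω hω x
  exact norm_toLpLin_le_of_mem_signedCyclicPowers hω x

theorem ae_norm_X_le_one : ∀ᵐ ω ∂P, ∀ k, 1 ≤ k → ‖W.X k ω‖ ≤ 1 := by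
  have hβ : ∀ᵐ ω ∂P, ∀ n ∈ Set.Ici 1, W.β n ω ∈ Icc 1 n :=
    (ae_ball_iff (Set.to_countable _)).2 fun _ hn => W.ae_beta_mem_Icc hn
  have hA : ∀ᵐ ω ∂P, ∀ n ∈ Set.Ici 1, ∀ x, ‖Matrix.toLpLin 2 2 (W.A (n + 1) ω) x‖ ≤ ‖x‖ :=
    (ae_ball_iff (Set.to_countable _)).2 fun _ hn => W.ae_norm_toLpLin_A_le hn
  filter_upwards [W.ae_norm_X_one_le, hβ, hA] with ω h1 hβ hA
  intro k hk
  induction k using Nat.strong_induction_on with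
  | _ k ih =>
    obtain rfl | ⟨n, hn, rfl⟩ : k = 1 ∨ ∃ n, 1 ≤ n ∧ k = n + 1 :=
      (eq_or_lt_of_le hk).imp Eq.symm fun h => ⟨k - 1, by omega, by omega⟩
    · exact h1
    · have hb := mem_Icc.1 (hβ n hn)
      rw [W.X_succ_eq hn]
      exact (hA n hn _).trans (ih _ (by omega) hb.1)

theorem measure_X_succ_ne_zero_le {n : ℕ} (hn : 1 ≤ n) :
    P {ω | W.X (n + 1) ω ≠ 0}
      ≤ ENNReal.ofReal ((1 - r) / n) * ∑ k ∈ Icc 1 n, P {ω | W.X k ω ≠ 0} := by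
  have hsub : {ω | W.X (n + 1) ω ≠ 0} ≤ᵐ[P] ⋃ k ∈ Icc 1 n,
      {ω | W.A (n + 1) ω ≠ 0} ∩ {ω | W.β n ω = k} ∩ {ω | W.X k ω ≠ 0} := by
    filter_upwards [W.ae_beta_mem_Icc hn] with ω hβ hω
    obtain ⟨hA, hX⟩ := W.A_ne_zero_and_X_beta_ne_zero hn hω
    exact Set.mem_biUnion hβ ⟨⟨hA, rfl⟩, hX⟩
  have hA : P {ω | W.A (n + 1) ω ≠ 0} = ENNReal.ofReal (1 - r) := by
    rw [show {ω | W.A (n + 1) ω ≠ 0} = {ω | W.A (n + 1) ω = 0}ᶜ from rfl,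
      prob_compl_eq_one_sub (s := {ω | W.A (n + 1) ω = 0})
        (W.measA _ (measurableSet_singleton 0)),
      W.hAzero n hn, ENNReal.ofReal_sub _ W.hr.1, ENNReal.ofReal_one]
  calc P {ω | W.X (n + 1) ω ≠ 0}
      ≤ ∑ k ∈ Icc 1 n,
          P ({ω | W.A (n + 1) ω ≠ 0} ∩ {ω | W.β n ω = k} ∩ {ω | W.X k ω ≠ 0}) :=
        (measure_mono_ae hsub).trans (measure_biUnion_finset_le _ _)
    _ = ∑ k ∈ Icc 1 n,
          ENNReal.ofReal (1 - r) * ENNReal.ofReal (1 / n) * P {ω | W.X k ω ≠ 0} :=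
        sum_congr rfl fun k hk => by
          rw [W.measure_A_beta_X_inter_eq_mul hn hk, hA, W.hβ n hn k hk]
    _ = _ := by
        rw [← mul_sum, ← ENNReal.ofReal_mul (by linarith [W.hr.2]), mul_one_div]

theorem sum_measure_X_ne_zero_le_aseq {n : ℕ} (hn : 1 ≤ n) :
    ∑ k ∈ Icc 1 n, P {ω | W.X k ω ≠ 0} ≤ ENNReal.ofReal (aseq r n) := by
  induction n, hn using Nat.le_induction with
  | base => simpa [aseq] using prob_le_one
  | succ n hn ih =>
    set S := ∑ k ∈ Icc 1 n, P {ω | W.X k ω ≠ 0}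
    have hstep : 0 ≤ (1 - r) / n := div_nonneg (by linarith [W.hr.2]) n.cast_nonneg
    calc ∑ k ∈ Icc 1 (n + 1), P {ω | W.X k ω ≠ 0}
        = S + P {ω | W.X (n + 1) ω ≠ 0} := sum_Icc_succ_top (by omega) _
      _ ≤ S + ENNReal.ofReal ((1 - r) / n) * S := by
          gcongr; exact W.measure_X_succ_ne_zero_le hn
      _ = S * (1 + ENNReal.ofReal ((1 - r) / n)) := by ring
      _ ≤ ENNReal.ofReal (aseq r n) * (1 + ENNReal.ofReal ((1 - r) / n)) := by gcongr
      _ = ENNReal.ofReal (aseq r (n + 1)) := by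
          rw [aseq_succ r hn, ENNReal.ofReal_mul (aseq_nonneg W.hr.2 n),
            ENNReal.ofReal_add zero_le_one hstep, ENNReal.ofReal_one]

theorem lintegral_Zstar_le_sum (n : ℕ) :
    ∫⁻ ω, ENNReal.ofReal (W.Zstar n ω) ∂P ≤ ∑ k ∈ Icc 1 n, P {ω | W.X k ω ≠ 0} := by
  have hmeas : ∀ k, MeasurableSet {ω | W.X k ω ≠ 0} := fun k =>
    (W.measX k (measurableSet_singleton 0)).compl
  calc ∫⁻ ω, ENNReal.ofReal (W.Zstar n ω) ∂P
      ≤ ∫⁻ ω, ∑ k ∈ Icc 1 n, {ω | W.X k ω ≠ 0}.indicator 1 ω ∂P := by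
        refine lintegral_mono_ae ?_
        filter_upwards [W.ae_norm_X_le_one] with ω hω
        rw [Zstar, ENNReal.ofReal_sum_of_nonneg fun _ _ => by positivity]
        refine sum_le_sum fun k hk => ?_
        by_cases h : W.X k ω = 0
        · simp [h]
        · rw [Set.indicator_of_mem (show ω ∈ {ω | W.X k ω ≠ 0} from h), Pi.one_apply]
          exact ENNReal.ofReal_le_one.2 (pow_le_one₀ (norm_nonneg _) (hω k (mem_Icc.1 hk).1))
    _ = ∑ k ∈ Icc 1 n, P {ω | W.X k ω ≠ 0} := by
        rw [lintegral_finsetSum _ fun k _ => measurable_one.indicator (hmeas k)]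
        exact sum_congr rfl fun k _ => lintegral_indicator_one (hmeas k)

theorem measure_le_Zstar_le {n : ℕ} (hn : 1 ≤ n) {c : ℝ} (hc : 0 < c) :
    P {ω | c ≤ W.Zstar n ω} ≤ ENNReal.ofReal (Real.exp (1 - r) * (n : ℝ) ^ (1 - r) / c) := by
  calc P {ω | c ≤ W.Zstar n ω}
      ≤ P {ω | ENNReal.ofReal c ≤ ENNReal.ofReal (W.Zstar n ω)} :=
        measure_mono fun ω h => ENNReal.ofReal_le_ofReal h
    _ ≤ (∫⁻ ω, ENNReal.ofReal (W.Zstar n ω) ∂P) / ENNReal.ofReal c :=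
        meas_ge_le_lintegral_div (W.measurable_Zstar n).ennreal_ofReal.aemeasurable
          (ENNReal.ofReal_pos.2 hc).ne' ENNReal.ofReal_ne_top
    _ ≤ ENNReal.ofReal (Real.exp (1 - r) * (n : ℝ) ^ (1 - r)) / ENNReal.ofReal c := by
        gcongr
        exact ((W.lintegral_Zstar_le_sum n).trans (W.sum_measure_X_ne_zero_le_aseq hn)).trans
          (ENNReal.ofReal_le_ofReal (aseq_le_exp_mul_rpow W.hr.2 hn))
    _ = _ := (ENNReal.ofReal_div_of_pos hc).symm

theorem ae_eventually_Zstar_two_pow_lt (hr : 1 / 2 < r) :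
    ∀ᵐ ω ∂P, ∀ᶠ j in atTop, W.Zstar (2 ^ j) ω < √((2 : ℝ) ^ j) := by
  set ρ : ℝ := 2 ^ (1 - r - 1 / 2)
  have hρ : ρ < 1 := Real.rpow_lt_one_of_one_lt_of_neg one_lt_two (by linarith)
  have hbound : ∀ j : ℕ, P {ω | √((2 : ℝ) ^ j) ≤ W.Zstar (2 ^ j) ω}
      ≤ ENNReal.ofReal (Real.exp (1 - r) * ρ ^ j) := by
    intro j
    refine (W.measure_le_Zstar_le Nat.one_le_two_pow (by positivity)).trans_eq ?_
    rw [mul_div_assoc, Real.sqrt_eq_rpow, Nat.cast_pow, Nat.cast_ofNat,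
      ← Real.rpow_sub (by positivity), Real.rpow_pow_comm zero_le_two]
  have hsum : ∑' j, P {ω | √((2 : ℝ) ^ j) ≤ W.Zstar (2 ^ j) ω} ≠ ∞ := by
    refine ne_top_of_le_ne_top ?_ (ENNReal.tsum_le_tsum hbound)
    rw [← ENNReal.ofReal_tsum_of_nonneg (fun j => by positivity)
      ((summable_geometric_of_lt_one (by positivity) hρ).mul_left _)]
    exact ENNReal.ofReal_ne_top
  filter_upwards [ae_eventually_notMem hsum] with ω hω
  simpa only [Set.mem_ofPred_eq, not_le] using hω

end MERWStops

/-- In the MERW with stops, if `1/2 < r ≤ 1`, then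
`limsup Z_n*/√(2 n log log n) ≤ 1/√(2r-1)` a.s. -/
theorem merwStops_lil_of_half_lt_r
    {Ω : Type*} [MeasurableSpace Ω] {P : Measure Ω} [IsProbabilityMeasure P]
    {d : ℕ} {p q r : ℝ} (W : MERWStops P d p q r) (hr : 1 / 2 < r) :
    ∀ᵐ ω ∂P,
      limsup (fun n : ℕ =>
          W.Zstar n ω / Real.sqrt (2 * n * Real.log (Real.log n))) atTop
        ≤ 1 / Real.sqrt (2 * r - 1) := by
  filter_upwards [W.ae_eventually_Zstar_two_pow_lt hr] with ω hω
  have hlim := tendsto_div_sqrt_two_mul_log_log_of_eventually_le (W.Zstar_nonneg · ω)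
    (eventually_le_sqrt_two_mul_of_eventually_two_pow_lt (W.Zstar_mono ω) hω)
  rw [hlim.limsup_eq]
  positivity
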